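/- arXiv:1012.5832 — 3 statements merged into one kernel-verified Lean document; each statement's English description precedes it below -/
import Mathlib

section
/- Suppose θ > -∞, w_j are twice continuously differentiable, strictly decreasing, with sub-quadratic second derivatives (ω_j(p) = w_j''(p)/w_j'(p)^2 < 1 for all p). If p_f ∈ (0,∞)^{J_f} satisfies the first-order condition (∇_f π̂_f)(p_f, p_{-f}) = 0, then the intra-firm Hessian of profit at p is the diagonal matrix (D_f ∇_f π̂_f)(p) = Λ_f(p)(I - Ω_f(p_f)), where Λ_f(p) = diag(w_j'(p_j) P_j(p)) and Ω_f(p_f) = diag(ω_j(p_j)); this matrix is negative definite, so every stationary point of π̂_f(·, p_{-f}) is a strict local maximizer. -/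
/-!
Writing `m_k = p_k - c_k - π(p)`, the gradient of the firm's profit in its own prices is
`∂_k π = P_k (1 + w_k' m_k)`, so the first-order condition says `w_k' m_k = -1`. Differentiating
once more, the factor `1 + w_k' m_k` and the terms `∂_l π` vanish at a stationary point, leaving
the diagonal entries `P_k (w_k' - w_k'' / w_k') = w_k' P_k (1 - ω_k) < 0`. A diagonal negative
definite Hessian gives a strict local maximum by the second-order Taylor estimate along
segments, applied through the mean value theorem.
-/

open Filter Set Topology

section SecondOrderTest

variable {ι : Type*} [DecidableEq ι] {s : Finset ι}

theorem ContinuousLinearMap.apply_eq_sum_mul_apply_single (L : (ι → ℝ) →L[ℝ] ℝ) {u : ι → ℝ}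
    (hu : ∀ i ∉ s, u i = 0) : L u = ∑ k ∈ s, u k * L (Pi.single k 1) := by
  have hsum : u = ∑ k ∈ s, u k • Pi.single k 1 := by
    ext j
    by_cases hj : j ∈ s <;> simp [Finset.sum_apply, Pi.single_apply, hj, hu j]
  conv_lhs => rw [hsum]
  simp [map_sum, map_smul]

theorem HasFDerivAt.hasDerivAt_comp_update [Fintype ι] {f : (ι → ℝ) → ℝ}
    {f' : (ι → ℝ) →L[ℝ] ℝ} {p : ι → ℝ} (hf : HasFDerivAt f f' p) (j : ι) :
    HasDerivAt (fun x => f (Function.update p j x)) (f' (Pi.single j 1)) (p j) := by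
  rw [← Function.update_eq_self j p] at hf
  exact hf.comp_hasDerivAt (p j) (hasDerivAt_update p j (p j))

theorem sq_norm_le_sum_sq_of_support [Fintype ι] {u : ι → ℝ} (hu : ∀ i ∉ s, u i = 0) :
    ‖u‖ ^ 2 ≤ ∑ k ∈ s, u k ^ 2 := by
  have hsum : 0 ≤ ∑ k ∈ s, u k ^ 2 := Finset.sum_nonneg fun k _ => sq_nonneg (u k)
  refine (Real.le_sqrt (norm_nonneg u) hsum).1 <| (pi_norm_le_iff_of_nonneg (Real.sqrt_nonneg _)).2
    fun i => Real.abs_le_sqrt ?_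
  by_cases hi : i ∈ s
  · exact Finset.single_le_sum (fun k _ => sq_nonneg (u k)) hi
  · simpa [hu i hi] using hsum

theorem exists_pos_sum_mul_apply_le_of_diagonal [Fintype ι] {H : ι → (ι → ℝ) →L[ℝ] ℝ} {d : ι → ℝ}
    (hdiag : ∀ k ∈ s, ∀ l ∈ s, H k (Pi.single l 1) = if k = l then d k else 0)
    (hneg : ∀ k ∈ s, d k < 0) :
    ∃ m > 0, ∀ u : ι → ℝ, (∀ i ∉ s, u i = 0) → ∑ k ∈ s, u k * H k u ≤ -(m * ‖u‖ ^ 2) := by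
  obtain ⟨m, hm, hdm⟩ : ∃ m > 0, ∀ k ∈ s, m ≤ -d k :=
    (eventually_mem_nhdsWithin.and <| nhdsWithin_le_nhds <| (eventually_all_finset s).2
      fun k hk => eventually_le_nhds (neg_pos.2 (hneg k hk))).exists (f := 𝓝[>] (0 : ℝ))
  refine ⟨m, hm, fun u hu => ?_⟩
  calc ∑ k ∈ s, u k * H k u = ∑ k ∈ s, d k * u k ^ 2 := by
        refine Finset.sum_congr rfl fun k hk => ?_
        rw [(H k).apply_eq_sum_mul_apply_single hu, Finset.sum_congr rfl fun l hl => by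
          rw [hdiag k hk l hl, mul_ite, mul_zero], Finset.sum_ite_eq, if_pos hk]
        ring
    _ ≤ ∑ k ∈ s, -m * u k ^ 2 :=
        Finset.sum_le_sum fun k hk => mul_le_mul_of_nonneg_right (le_neg.1 (hdm k hk)) (sq_nonneg _)
    _ ≤ -(m * ‖u‖ ^ 2) := by
        rw [← Finset.mul_sum, neg_mul, neg_le_neg_iff]
        exact mul_le_mul_of_nonneg_left (sq_norm_le_sum_sq_of_support hu) hm.le

theorem exists_forall_lt_of_diagonal_hessian [Fintype ι] {f : (ι → ℝ) → ℝ}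
    {f' : (ι → ℝ) → (ι → ℝ) →L[ℝ] ℝ} {H : ι → (ι → ℝ) →L[ℝ] ℝ} {p : ι → ℝ} {d : ι → ℝ}
    (hf : ∀ᶠ q in 𝓝 p, HasFDerivAt f (f' q) q)
    (hH : ∀ k ∈ s, HasFDerivAt (fun q => f' q (Pi.single k 1)) (H k) p)
    (hcrit : ∀ k ∈ s, f' p (Pi.single k 1) = 0)
    (hdiag : ∀ k ∈ s, ∀ l ∈ s, H k (Pi.single l 1) = if k = l then d k else 0)
    (hneg : ∀ k ∈ s, d k < 0) :
    ∃ ε > 0, ∀ q, (∀ i ∉ s, q i = p i) → q ≠ p → dist q p < ε → f q < f p := by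
  obtain ⟨m, hm, hcoer⟩ := exists_pos_sum_mul_apply_le_of_diagonal hdiag hneg
  set C := m / (2 * (s.card + 1))
  have hC : 0 < C := by positivity
  have hnear : ∀ᶠ q in 𝓝 p, HasFDerivAt f (f' q) q ∧
      ∀ k ∈ s, |f' q (Pi.single k 1) - H k (q - p)| ≤ C * ‖q - p‖ := by
    refine hf.and <| (eventually_all_finset s).2 fun k hk => ?_
    filter_upwards [(hH k hk).isLittleO.bound hC] with q hq
    simpa [hcrit k hk] using hq
  obtain ⟨ε, hε, hball⟩ := Metric.eventually_nhds_iff_ball.1 hnear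
  refine ⟨ε, hε, fun q hq hne hdist => ?_⟩
  set u := q - p
  have hu : ∀ i ∉ s, u i = 0 := fun i hi => sub_eq_zero.2 (hq i hi)
  have hupos : 0 < ‖u‖ := norm_pos_iff.2 (sub_ne_zero.2 hne)
  have hseg (t : ℝ) (ht : t ∈ Icc (0 : ℝ) 1) : p + t • u ∈ Metric.ball p ε :=
    (convex_ball p ε).add_smul_sub_mem (Metric.mem_ball_self hε) hdist ht
  have hslope (t : ℝ) (ht : t ∈ Ioc (0 : ℝ) 1) : f' (p + t • u) u < 0 := by
    obtain ⟨-, herr⟩ := hball _ (hseg t (Ioc_subset_Icc_self ht))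
    simp only [add_sub_cancel_left, norm_smul, Real.norm_of_nonneg ht.1.le] at herr
    have hsplit : f' (p + t • u) u = t * ∑ k ∈ s, u k * H k u
        + ∑ k ∈ s, u k * (f' (p + t • u) (Pi.single k 1) - H k (t • u)) := by
      simp only [(f' _).apply_eq_sum_mul_apply_single hu, Finset.mul_sum, ← Finset.sum_add_distrib,
        map_smul, smul_eq_mul]
      exact Finset.sum_congr rfl fun k _ => by ring
    have herr_sum : ∑ k ∈ s, u k * (f' (p + t • u) (Pi.single k 1) - H k (t • u))
        ≤ s.card * (‖u‖ * (C * (t * ‖u‖))) := by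
      rw [← nsmul_eq_mul, ← Finset.sum_const]
      refine Finset.sum_le_sum fun k hk => (le_abs_self _).trans ?_
      rw [abs_mul]
      exact mul_le_mul (norm_le_pi_norm u k) (herr k hk) (abs_nonneg _) (norm_nonneg _)
    have hcard : (s.card : ℝ) * C ≤ m / 2 := by
      rw [mul_div_assoc', div_le_div_iff₀ (by positivity) two_pos]
      nlinarith
    have htu : 0 < t * ‖u‖ ^ 2 := mul_pos ht.1 (pow_pos hupos 2)
    calc f' (p + t • u) u ≤ t * -(m * ‖u‖ ^ 2) + s.card * C * (t * ‖u‖ ^ 2) := by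
          rw [hsplit]
          refine add_le_add (mul_le_mul_of_nonneg_left (hcoer u hu) ht.1.le) (herr_sum.trans_eq ?_)
          ring
      _ ≤ t * -(m * ‖u‖ ^ 2) + m / 2 * (t * ‖u‖ ^ 2) := by gcongr
      _ < 0 := by nlinarith
  have hderiv (t : ℝ) (ht : t ∈ Icc (0 : ℝ) 1) :
      HasDerivAt (fun t : ℝ => f (p + t • u)) (f' (p + t • u) u) t :=
    (hball _ (hseg t ht)).1.comp_hasDerivAt t
      (by simpa using ((hasDerivAt_id t).smul_const u).const_add p)
  obtain ⟨t, ht, hmvt⟩ := exists_hasDerivAt_eq_slope (fun t : ℝ => f (p + t • u)) _ zero_lt_one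
    (fun t ht => (hderiv t ht).continuousAt.continuousWithinAt)
    (fun t ht => hderiv t (Ioo_subset_Icc_self ht))
  have := hslope t (Ioo_subset_Ioc_self ht)
  simp only [one_smul, zero_smul, add_zero, add_sub_cancel, sub_zero, div_one, u] at hmvt
  linarith

end SecondOrderTest

namespace Logit

noncomputable section

open ContinuousLinearMap (proj)

variable {ι : Type*} [Fintype ι] (w w' w'' : ι → ℝ → ℝ) (v : ι → ℝ) (θ : ℝ) (c : ι → ℝ)
  (Jf : Finset ι)

def prob (q : ι → ℝ) (i : ι) : ℝ :=
  Real.exp (w i (q i) + v i) / (Real.exp θ + ∑ k, Real.exp (w k (q k) + v k))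

def profit (q : ι → ℝ) : ℝ := ∑ i ∈ Jf, prob w v θ q i * (q i - c i)

/-- The paper's `λ(q) = (w_k'(q_k) P_k(q))_k` as a covector: `D P_i = P_i (w_i' e_i - λ)`. -/
def score (q : ι → ℝ) : (ι → ℝ) →L[ℝ] ℝ := ∑ k, (w' k (q k) * prob w v θ q k) • proj k

def profitDeriv (q : ι → ℝ) : (ι → ℝ) →L[ℝ] ℝ :=
  ∑ i ∈ Jf, (prob w v θ q i * (1 + w' i (q i) * (q i - c i))) • proj i
    - profit w v θ c Jf q • score w w' v θ q

def marginalProfit (k : ι) (q : ι → ℝ) : ℝ :=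
  prob w v θ q k * (1 + w' k (q k) * (q k - c k - profit w v θ c Jf q))

def marginalProfitDeriv (k : ι) (q : ι → ℝ) : (ι → ℝ) →L[ℝ] ℝ :=
  prob w v θ q k • ((w'' k (q k) * (q k - c k - profit w v θ c Jf q)) • proj k +
      w' k (q k) • (proj k - profitDeriv w w' v θ c Jf q)) +
    (1 + w' k (q k) * (q k - c k - profit w v θ c Jf q)) •
      (prob w v θ q k • (w' k (q k) • proj k - score w w' v θ q))

variable {w w' w'' v θ c Jf}

lemma prob_pos (q : ι → ℝ) (i : ι) : 0 < prob w v θ q i := by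
  unfold prob; positivity

section Derivatives

variable {q : ι → ℝ} (hw : ∀ k, HasDerivAt (w k) (w' k (q k)) (q k))
include hw

lemma hasFDerivAt_prob (i : ι) :
    HasFDerivAt (fun q => prob w v θ q i)
      (prob w v θ q i • (w' i (q i) • proj i - score w w' v θ q)) q := by
  set E : ι → (ι → ℝ) → ℝ := fun k q => Real.exp (w k (q k) + v k)
  set S : (ι → ℝ) → ℝ := fun q => Real.exp θ + ∑ k, E k q
  have hE (k : ι) : HasFDerivAt (E k) (E k q • w' k (q k) • proj k) q :=
    (((hw k).comp_hasFDerivAt q (hasFDerivAt_apply (𝕜 := ℝ) k q)).add_const (v k)).exp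
  have hS : HasFDerivAt S (∑ k, E k q • w' k (q k) • proj k) q :=
    (HasFDerivAt.fun_sum fun k _ => hE k).const_add _
  have hSpos : 0 < S q := by positivity
  have hdiv := (hE i).mul ((hasDerivAt_inv hSpos.ne').comp_hasFDerivAt q hS)
  have hfun : (fun q => prob w v θ q i) = E i * (fun y => y⁻¹) ∘ S := by
    funext q'; simp only [prob, E, S, div_eq_mul_inv]; rfl
  rw [hfun]
  refine hdiv.congr_fderiv ?_
  have hprob (k : ι) : prob w v θ q k = E k q / S q := rfl
  ext u
  simp only [score, hprob, add_apply, sub_apply, smul_apply, sum_apply, smul_eq_mul,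
    ContinuousLinearMap.proj_apply, Function.comp_apply, mul_sub, Finset.mul_sum]
  rw [sub_eq_neg_add, ← Finset.sum_neg_distrib]
  congr 1
  · exact Finset.sum_congr rfl fun k _ => by field_simp
  · field_simp

lemma hasFDerivAt_profit :
    HasFDerivAt (profit w v θ c Jf) (profitDeriv w w' v θ c Jf q) q := by
  have := HasFDerivAt.fun_sum (u := Jf) fun i _ =>
    (hasFDerivAt_prob (v := v) (θ := θ) hw i).mul ((hasFDerivAt_apply (𝕜 := ℝ) i q).sub_const (c i))
  refine this.congr_fderiv ?_
  ext u
  simp only [profitDeriv, profit, add_apply, sub_apply, smul_apply, sum_apply, smul_eq_mul,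
    ContinuousLinearMap.proj_apply]
  rw [Finset.sum_mul, ← Finset.sum_sub_distrib]
  exact Finset.sum_congr rfl fun i _ => by ring

lemma hasFDerivAt_marginalProfit (k : ι) (hw' : HasDerivAt (w' k) (w'' k (q k)) (q k)) :
    HasFDerivAt (marginalProfit w w' v θ c Jf k) (marginalProfitDeriv w w' w'' v θ c Jf k q) q := by
  have hk := hasFDerivAt_apply (𝕜 := ℝ) k q
  have hmarkup :=
    (hk.sub_const (c k)).sub (hasFDerivAt_profit (c := c) (Jf := Jf) (v := v) (θ := θ) hw)
  have hslope := hw'.comp_hasFDerivAt q hk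
  have hmargin : HasFDerivAt (fun q => 1 + w' k (q k) * (q k - c k - profit w v θ c Jf q))
      ((w'' k (q k) * (q k - c k - profit w v θ c Jf q)) • proj k +
        w' k (q k) • (proj k - profitDeriv w w' v θ c Jf q)) q := by
    refine ((hslope.mul hmarkup).const_add 1).congr_fderiv ?_
    ext u
    simp only [add_apply, smul_apply, sub_apply, smul_eq_mul, Function.comp_apply, Pi.sub_apply]
    ring
  exact (hasFDerivAt_prob hw k).mul hmargin

end Derivatives

lemma marginalProfit_eq_zero_iff (k : ι) (q : ι → ℝ) :
    marginalProfit w w' v θ c Jf k q = 0 ↔ w' k (q k) * (q k - c k - profit w v θ c Jf q) = -1 := by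
  rw [marginalProfit, mul_eq_zero, or_iff_right (prob_pos q k).ne', add_eq_zero_iff_eq_neg']

variable [DecidableEq ι]

lemma score_single (q : ι → ℝ) (l : ι) :
    score w w' v θ q (Pi.single l 1) = w' l (q l) * prob w v θ q l := by
  simp [score, Pi.single_apply]

lemma profitDeriv_single {l : ι} (hl : l ∈ Jf) (q : ι → ℝ) :
    profitDeriv w w' v θ c Jf q (Pi.single l 1) = marginalProfit w w' v θ c Jf l q := by
  simp only [profitDeriv, marginalProfit, sub_apply, sum_apply, smul_apply, score_single,
    ContinuousLinearMap.proj_apply, Pi.single_apply, smul_eq_mul, mul_ite, mul_one, mul_zero,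
    Finset.sum_ite_eq', hl, if_true]
  ring

lemma marginalProfitDeriv_single {p : ι → ℝ}
    (hcrit : ∀ l ∈ Jf, marginalProfit w w' v θ c Jf l p = 0) {k l : ι} (hk : k ∈ Jf) (hl : l ∈ Jf) :
    marginalProfitDeriv w w' w'' v θ c Jf k p (Pi.single l 1)
      = if k = l then w' k (p k) * prob w v θ p k * (1 - w'' k (p k) / w' k (p k) ^ 2) else 0 := by
  have hfoc := (marginalProfit_eq_zero_iff k p).1 (hcrit k hk)
  have hw'k : w' k (p k) ≠ 0 := left_ne_zero_of_mul (hfoc.trans_ne (by norm_num))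
  simp only [marginalProfitDeriv, hfoc, add_apply, smul_apply, sub_apply, profitDeriv_single hl,
    hcrit l hl, ContinuousLinearMap.proj_apply, Pi.single_apply, smul_eq_mul]
  split_ifs with hkl
  · subst hkl
    field_simp
    linear_combination prob w v θ p k * w'' k (p k) * hfoc
  · simp

end

end Logit

open Logit in
theorem stmt_10_general {J : ℕ} (w w' w'' : Fin J → ℝ → ℝ) (v : Fin J → ℝ) (θ : ℝ)
    (c : Fin J → ℝ) (Jf : Finset (Fin J))
    (hd1 : ∀ k : Fin J, ∀ x > (0:ℝ), HasDerivAt (w k) (w' k x) x)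
    (hd2 : ∀ k : Fin J, ∀ x > (0:ℝ), HasDerivAt (w' k) (w'' k x) x)
    (hneg : ∀ k : Fin J, ∀ x > (0:ℝ), w' k x < 0)
    (hsq : ∀ k : Fin J, ∀ x > (0:ℝ), w'' k x / (w' k x) ^ 2 < 1)
    (p : Fin J → ℝ) (hp : ∀ i, 0 < p i)
    (hstat : ∀ j ∈ Jf,
      HasDerivAt
        (fun x => ∑ i ∈ Jf,
          (Real.exp (w i ((Function.update p j x) i) + v i) /
              (Real.exp θ + ∑ k, Real.exp (w k ((Function.update p j x) k) + v k))) *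
            ((Function.update p j x) i - c i)) 0 (p j)) :
    let P : (Fin J → ℝ) → Fin J → ℝ := fun q i =>
      Real.exp (w i (q i) + v i) / (Real.exp θ + ∑ k, Real.exp (w k (q k) + v k))
    let profit : (Fin J → ℝ) → ℝ := fun q => ∑ i ∈ Jf, P q i * (q i - c i)
    -- the intra-firm Hessian at p is diagonal: Λ_f(p)(I - Ω_f(p_f))
    (∀ k ∈ Jf, ∀ l ∈ Jf,
      (fderiv ℝ (fun q => fderiv ℝ profit q (Pi.single k 1)) p) (Pi.single l 1)
        = if k = l then (w' k (p k) * P p k) * (1 - w'' k (p k) / (w' k (p k)) ^ 2)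
          else 0) ∧
    -- the diagonal entries are negative (negative definiteness)
    (∀ k ∈ Jf, (w' k (p k) * P p k) * (1 - w'' k (p k) / (w' k (p k)) ^ 2) < 0) ∧
    -- hence p is a strict local maximizer of the firm's profit
    (∃ ε > (0:ℝ), ∀ q : Fin J → ℝ, (∀ i, i ∉ Jf → q i = p i) → q ≠ p →
      dist q p < ε → profit q < profit p) := by
  intro P profit
  have hpos : ∀ᶠ q in 𝓝 p, ∀ i, 0 < q i :=
    eventually_all.2 fun i => (continuous_apply i).continuousAt.eventually (lt_mem_nhds (hp i))
  have hprofit : ∀ᶠ q in 𝓝 p, HasFDerivAt profit (profitDeriv w w' v θ c Jf q) q :=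
    hpos.mono fun q hq => hasFDerivAt_profit fun k => hd1 k (q k) (hq k)
  have hcrit (k : Fin J) (hk : k ∈ Jf) : marginalProfit w w' v θ c Jf k p = 0 := by
    rw [← profitDeriv_single hk]
    exact (hprofit.self_of_nhds.hasDerivAt_comp_update k).unique (hstat k hk)
  have hH (k : Fin J) (hk : k ∈ Jf) :
      HasFDerivAt (fun q => profitDeriv w w' v θ c Jf q (Pi.single k 1))
        (marginalProfitDeriv w w' w'' v θ c Jf k p) p := by
    simp only [profitDeriv_single hk]
    exact hasFDerivAt_marginalProfit (fun k => hd1 k (p k) (hp k)) k (hd2 k (p k) (hp k))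
  have hdiag (k : Fin J) (hk : k ∈ Jf) (l : Fin J) (hl : l ∈ Jf) :
      fderiv ℝ (fun q => fderiv ℝ profit q (Pi.single k 1)) p (Pi.single l 1)
        = if k = l then w' k (p k) * P p k * (1 - w'' k (p k) / w' k (p k) ^ 2) else 0 := by
    have hfderiv : (fun q => fderiv ℝ profit q (Pi.single k 1))
        =ᶠ[𝓝 p] fun q => profitDeriv w w' v θ c Jf q (Pi.single k 1) :=
      hprofit.mono fun q hq => DFunLike.congr_fun hq.fderiv _
    rw [hfderiv.fderiv_eq, (hH k hk).fderiv]
    exact marginalProfitDeriv_single hcrit hk hl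
  have hdiag_neg (k : Fin J) (_ : k ∈ Jf) :
      w' k (p k) * P p k * (1 - w'' k (p k) / w' k (p k) ^ 2) < 0 :=
    mul_neg_of_neg_of_pos (mul_neg_of_neg_of_pos (hneg k (p k) (hp k)) (prob_pos p k))
      (sub_pos.2 (hsq k (p k) (hp k)))
  refine ⟨hdiag, hdiag_neg, exists_forall_lt_of_diagonal_hessian hprofit hH
    (fun k hk => (profitDeriv_single hk p).trans (hcrit k hk))
    (fun k hk l hl => marginalProfitDeriv_single hcrit hk hl) hdiag_neg⟩

theorem stmt_10 {J : ℕ} (w w' w'' : Fin J → ℝ → ℝ) (v : Fin J → ℝ) (θ : ℝ)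
    (c : Fin J → ℝ) (Jf : Finset (Fin J)) (hc : ∀ j, 0 ≤ c j)
    (hd1 : ∀ k : Fin J, ∀ x > (0:ℝ), HasDerivAt (w k) (w' k x) x)
    (hd2 : ∀ k : Fin J, ∀ x > (0:ℝ), HasDerivAt (w' k) (w'' k x) x)
    (hneg : ∀ k : Fin J, ∀ x > (0:ℝ), w' k x < 0)
    (hsq : ∀ k : Fin J, ∀ x > (0:ℝ), w'' k x / (w' k x) ^ 2 < 1)
    (p : Fin J → ℝ) (hp : ∀ i, 0 < p i)
    (hstat : ∀ j ∈ Jf,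
      HasDerivAt
        (fun x => ∑ i ∈ Jf,
          (Real.exp (w i ((Function.update p j x) i) + v i) /
              (Real.exp θ + ∑ k, Real.exp (w k ((Function.update p j x) k) + v k))) *
            ((Function.update p j x) i - c i)) 0 (p j)) :
    let P : (Fin J → ℝ) → Fin J → ℝ := fun q i =>
      Real.exp (w i (q i) + v i) / (Real.exp θ + ∑ k, Real.exp (w k (q k) + v k))
    let profit : (Fin J → ℝ) → ℝ := fun q => ∑ i ∈ Jf, P q i * (q i - c i)
    -- the intra-firm Hessian at p is diagonal: Λ_f(p)(I - Ω_f(p_f))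
    (∀ k ∈ Jf, ∀ l ∈ Jf,
      (fderiv ℝ (fun q => fderiv ℝ profit q (Pi.single k 1)) p) (Pi.single l 1)
        = if k = l then (w' k (p k) * P p k) * (1 - w'' k (p k) / (w' k (p k)) ^ 2)
          else 0) ∧
    -- the diagonal entries are negative (negative definiteness)
    (∀ k ∈ Jf, (w' k (p k) * P p k) * (1 - w'' k (p k) / (w' k (p k)) ^ 2) < 0) ∧
    -- hence p is a strict local maximizer of the firm's profit
    (∃ ε > (0:ℝ), ∀ q : Fin J → ℝ, (∀ i, i ∉ Jf → q i = p i) → q ≠ p →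
      dist q p < ε → profit q < profit p) :=
  stmt_10_general w w' w'' v θ c Jf hd1 hd2 hneg hsq p hp hstat
end

section
/- Under the hypotheses that θ > -∞, w satisfies the standard Logit utility assumptions, eventually decreases sufficiently quickly, and has sub-quadratic second derivatives, the profit function π̂_f(·, p_{-f}) of each firm f (with constant unit costs, any fixed competitor prices p_{-f}) has a unique stationary point in (c_f, ∞)^{J_f}, and this point is the unique global maximizer of π̂_f(·, p_{-f}) over [0,∞]^{J_f}. The proof combines: every stationary point is a local maximizer with index (-1)^{J_f} for the gradient field, hence index 1 for the field φ_f, and the Poincaré–Hopf theorem forces the sum of indices over zeros of φ_f on a rectangle (on whose boundary φ_f points outward) to equal 1. -/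
open Real Set Function

/-!
Write `H_j x = x - c_j - 1 / |w_j' x|` (`adjustedMargin`) and `u_j = w_j + v_j`. Sub-quadratic
second derivatives make `H_j` strictly increasing and `x ↦ e^{u_j x} / |w_j' x|` strictly
decreasing; the decay assumption makes `H_j` exceed every level, so for each `m ≥ 0` there is a
unique price `x_j(m) > c_j` with `H_j (x_j(m)) = m`, continuous and increasing in `m`.

The first-order condition in `p_j` reads `H_j p_j = π̂_f(p)`. At prices with a common value
`H_j p_j = m`, one has `π̂_f(p) = m` iff `m A = ∑_j e^{u_j p_j} / |w_j' p_j|`, where `A` is the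
weight of the outside good and the rivals' products. Along `p_j = x_j(m)` the left side increases
and the right side decreases in `m`, which gives existence (intermediate value theorem) and
uniqueness of the stationary point; this replaces the index argument of the paper. Finally
`π̂_f(q) < m` iff `∑_j e^{u_j q_j} (q_j - c_j - m) < m A`, and each summand is uniquely maximised
at `q_j = x_j(m)`, where it equals `e^{u_j} / |w_j'|`; summing gives strict global maximality.
-/

theorem StrictMonoOn.strictMonoOn_of_rightInvOn {α β : Type*} [LinearOrder α]
    [LinearOrder β] {f : α → β} {g : β → α} {s : Set α} {t : Set β} (hf : StrictMonoOn f s)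
    (hg : MapsTo g t s) (hfg : RightInvOn g f t) : StrictMonoOn g t := by
  intro a ha b hb hab
  by_contra! h
  have := hf.monotoneOn (hg hb) (hg ha) h
  rw [hfg ha, hfg hb] at this
  exact hab.not_ge this

theorem StrictMonoOn.continuousOn_Ici_of_surjOn {α β : Type*} [LinearOrder α]
    [TopologicalSpace α] [OrderTopology α] [LinearOrder β] [TopologicalSpace β] [OrderTopology β]
    [DenselyOrdered β] {f : α → β} {a : α} (hf : StrictMonoOn f (Ici a))
    (hsurj : SurjOn f (Ici a) (Ioi (f a))) :
    ContinuousOn f (Ici a) := by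
  intro x hx
  rcases (mem_Ici.1 hx).eq_or_lt with rfl | hax
  · exact hf.continuousWithinAt_right_of_surjOn self_mem_nhdsWithin hsurj
  · exact (hf.continuousAt_of_image_mem_nhds (Ici_mem_nhds hax)
      (Filter.mem_of_superset (Ioi_mem_nhds (hf le_rfl hx hax)) hsurj)).continuousWithinAt

theorem exists_mul_eq_of_antitoneOn {Φ : ℝ → ℝ} {A : ℝ} (hA : 0 < A)
    (hcont : ContinuousOn Φ (Ici 0)) (hanti : AntitoneOn Φ (Ici 0)) (h0 : 0 ≤ Φ 0) :
    ∃ m, 0 ≤ m ∧ m * A = Φ m := by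
  set M := Φ 0 / A
  have hM : 0 ≤ M := div_nonneg h0 hA.le
  have hF : ContinuousOn (fun m => m * A - Φ m) (Icc 0 M) :=
    ((continuous_mul_const A).continuousOn.sub hcont).mono Icc_subset_Ici_self
  have hF0 : 0 * A - Φ 0 ≤ 0 := by linarith
  have hFM : 0 ≤ M * A - Φ M := by
    have := hanti self_mem_Ici hM hM
    rw [div_mul_cancel₀ _ hA.ne']
    linarith
  obtain ⟨m, hm, hmA⟩ := intermediate_value_Icc hM hF ⟨hF0, hFM⟩
  exact ⟨m, hm.1, sub_eq_zero.1 hmA⟩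

theorem Finset.sum_apply_update_of_mem {ι : Type*} [DecidableEq ι] {s : Finset ι} {j : ι}
    (hj : j ∈ s) (g : ι → ℝ → ℝ) (q : ι → ℝ) (x : ℝ) :
    ∑ i ∈ s, g i (update q j x i) = g j x + ∑ i ∈ s \ {j}, g i (q i) := by
  rw [← Finset.sum_update_of_mem hj]
  exact Finset.sum_congr rfl fun i _ => apply_update g q j x i

theorem hasDerivAt_exp_mul_sub_add_div {W : ℝ → ℝ} {d B C c x : ℝ} (hW : HasDerivAt W d x)
    (hC : exp (W x) + C ≠ 0) :
    HasDerivAt (fun y => (exp (W y) * (y - c) + B) / (exp (W y) + C))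
      (exp (W x) / (exp (W x) + C) *
        (1 + d * (x - c - (exp (W x) * (x - c) + B) / (exp (W x) + C)))) x := by
  have hE := hW.exp
  refine (((hE.mul ((hasDerivAt_id x).sub_const c)).add_const B).div (hE.add_const C)
    hC).congr_deriv ?_
  simp only [Pi.mul_apply, id]
  field_simp
  ring

/-- `x - c - 1 / |W' x|`: a price is stationary for the firm's profit exactly when its adjusted
margin equals that profit (the paper's `φ_j = 0`). -/
noncomputable def adjustedMargin (W' : ℝ → ℝ) (c x : ℝ) : ℝ := x - c + (W' x)⁻¹

theorem sub_sub_adjustedMargin (W' : ℝ → ℝ) (c x : ℝ) :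
    x - c - adjustedMargin W' c x = -(W' x)⁻¹ := by
  unfold adjustedMargin; ring

section SingleProduct

variable {W W' W'' : ℝ → ℝ}

theorem hasDerivAt_adjustedMargin {x : ℝ} (c : ℝ) (hW' : HasDerivAt W' (W'' x) x)
    (hx : W' x ≠ 0) : HasDerivAt (adjustedMargin W' c) (1 - W'' x / W' x ^ 2) x :=
  (((hasDerivAt_id x).sub_const c).add (hW'.inv hx)).congr_deriv (by ring)

theorem strictMonoOn_adjustedMargin (hW' : ∀ x > 0, HasDerivAt W' (W'' x) x)
    (hneg : ∀ x > 0, W' x < 0) (hsq : ∀ x > 0, W'' x / W' x ^ 2 < 1) (c : ℝ) :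
    StrictMonoOn (adjustedMargin W' c) (Ioi 0) := by
  have hD (x : ℝ) (hx : 0 < x) := hasDerivAt_adjustedMargin c (hW' x hx) (hneg x hx).ne
  refine strictMonoOn_of_deriv_pos (convex_Ioi 0)
    (fun x hx => (hD x hx).continuousAt.continuousWithinAt) fun x hx => ?_
  rw [interior_Ioi] at hx
  rw [(hD x hx).deriv]
  linarith [hsq x hx]

theorem strictAntiOn_neg_exp_div (hW : ∀ x > 0, HasDerivAt W (W' x) x)
    (hW' : ∀ x > 0, HasDerivAt W' (W'' x) x) (hneg : ∀ x > 0, W' x < 0)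
    (hsq : ∀ x > 0, W'' x / W' x ^ 2 < 1) :
    StrictAntiOn (fun x => -exp (W x) / W' x) (Ioi 0) := by
  have hD (x : ℝ) (hx : 0 < x) : HasDerivAt (fun x => -exp (W x) / W' x)
      (exp (W x) * (W'' x / W' x ^ 2 - 1)) x := by
    refine ((hW x hx).exp.neg.div (hW' x hx) (hneg x hx).ne).congr_deriv ?_
    have := (hneg x hx).ne
    simp only [Pi.neg_apply]
    field_simp
    ring
  refine strictAntiOn_of_deriv_neg (convex_Ioi 0)
    (fun x hx => (hD x hx).continuousAt.continuousWithinAt) fun x hx => ?_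
  rw [interior_Ioi] at hx
  rw [(hD x hx).deriv]
  exact mul_neg_of_pos_of_neg (exp_pos _) (by linarith [hsq x hx])

theorem exists_adjustedMargin_eq (hW' : ∀ x > 0, HasDerivAt W' (W'' x) x)
    (hneg : ∀ x > 0, W' x < 0) (hdecay : ∃ r > (1 : ℝ), ∃ pb : ℝ, ∀ p > pb, W' p ≤ -r / p)
    {c m : ℝ} (hc : 0 < c) (hm : 0 ≤ m) : ∃ x, c < x ∧ adjustedMargin W' c x = m := by
  obtain ⟨r, hr, pb, hpb⟩ := hdecay
  set x₁ := max (pb + 1) ((m + c) * r / (r - 1))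
  have hr₁ : 0 < r - 1 := by linarith
  have hx₁c : (m + c) * r ≤ x₁ * (r - 1) :=
    (div_le_iff₀ hr₁).1 (le_max_right _ _)
  have hcx₁ : c < x₁ := by nlinarith
  have hW'x₁ : W' x₁ ≤ -r / x₁ :=
    hpb x₁ (by linarith [le_max_left (pb + 1) ((m + c) * r / (r - 1))])
  -- the decay bound gives `1 / W' x₁ ≥ -x₁ / r`, so the margin at `x₁` is `≥ x₁ (1 - 1/r) - c ≥ m`
  have hmx₁ : m ≤ adjustedMargin W' c x₁ := by
    have hrx : -r / x₁ < 0 := div_neg_of_neg_of_pos (by linarith) (hc.trans hcx₁)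
    have hinv : -(x₁ / r) ≤ (W' x₁)⁻¹ :=
      calc -(x₁ / r) = (-r / x₁)⁻¹ := by rw [inv_div, div_neg]
        _ ≤ (W' x₁)⁻¹ := (inv_le_inv_of_neg hrx (hW'x₁.trans_lt hrx)).2 hW'x₁
    have hx₁r : m + c ≤ x₁ - x₁ / r := by
      rw [show x₁ - x₁ / r = x₁ * (r - 1) / r by field_simp, le_div_iff₀ (by linarith)]
      exact hx₁c
    unfold adjustedMargin
    linarith
  have hcont : ContinuousOn (adjustedMargin W' c) (Icc c x₁) := fun x hx =>
    (hasDerivAt_adjustedMargin c (hW' x (hc.trans_le hx.1)) (hneg x (hc.trans_le hx.1)).ne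
      ).continuousAt.continuousWithinAt
  have hm_c : adjustedMargin W' c c < m := by
    unfold adjustedMargin; linarith [inv_lt_zero.2 (hneg c hc)]
  obtain ⟨x, hx, hxm⟩ := intermediate_value_Ioc hcx₁.le hcont ⟨hm_c, hmx₁⟩
  exact ⟨x, hx.1, hxm⟩

theorem exp_mul_sub_lt_of_adjustedMargin_eq (hW : ∀ x > 0, HasDerivAt W (W' x) x)
    (hW' : ∀ x > 0, HasDerivAt W' (W'' x) x) (hneg : ∀ x > 0, W' x < 0)
    (hsq : ∀ x > 0, W'' x / W' x ^ 2 < 1) {c m p x : ℝ} (hcm : 0 < c + m) (hp : 0 < p)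
    (hpm : adjustedMargin W' c p = m) (hxp : x ≠ p) :
    exp (W x) * (x - c - m) < exp (W p) * (p - c - m) := by
  set ψ : ℝ → ℝ := fun y => exp (W y) * (y - c - m)
  -- as `W' < 0` and the adjusted margin increases through `m` at `p`, `ψ` rises before `p` and
  -- falls after it
  have hD (y : ℝ) (hy : 0 < y) :
      HasDerivAt ψ (exp (W y) * (W' y * (adjustedMargin W' c y - m))) y := by
    refine ((hW y hy).exp.mul (((hasDerivAt_id y).sub_const c).sub_const m)).congr_deriv ?_
    have := (hneg y hy).ne
    unfold adjustedMargin
    field_simp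
    simp only [id]
    ring
  have hcont : ContinuousOn ψ (Ioi 0) := fun y hy => (hD y hy).continuousAt.continuousWithinAt
  have hψp : 0 < ψ p := by
    have : p - c - m = -(W' p)⁻¹ := hpm ▸ sub_sub_adjustedMargin W' c p
    simp only [ψ, this]
    exact mul_pos (exp_pos _) (neg_pos.2 (inv_lt_zero.2 (hneg p hp)))
  have hH := strictMonoOn_adjustedMargin hW' hneg hsq c
  rcases le_or_gt x (c + m) with hxcm | hxcm
  · exact lt_of_le_of_lt (mul_nonpos_of_nonneg_of_nonpos (exp_pos _).le (by linarith)) hψp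
  have hx : 0 < x := hcm.trans hxcm
  rcases hxp.lt_or_gt with hxp | hpx
  · have hmono : StrictMonoOn ψ (Icc x p) := by
      refine strictMonoOn_of_deriv_pos (convex_Icc x p)
        (hcont.mono fun y hy => hx.trans_le hy.1) fun y hy => ?_
      rw [interior_Icc] at hy
      have hy0 : 0 < y := hx.trans hy.1
      rw [(hD y hy0).deriv]
      have : adjustedMargin W' c y < m := hpm ▸ hH hy0 hp hy.2
      exact mul_pos (exp_pos _) (mul_pos_of_neg_of_neg (hneg y hy0) (by linarith))
    exact hmono (left_mem_Icc.2 hxp.le) (right_mem_Icc.2 hxp.le) hxp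
  · have hanti : StrictAntiOn ψ (Icc p x) := by
      refine strictAntiOn_of_deriv_neg (convex_Icc p x)
        (hcont.mono fun y hy => hp.trans_le hy.1) fun y hy => ?_
      rw [interior_Icc] at hy
      have hy0 : 0 < y := hp.trans hy.1
      rw [(hD y hy0).deriv]
      have : m < adjustedMargin W' c y := hpm ▸ hH hp hy0 hy.1
      exact mul_neg_of_pos_of_neg (exp_pos _) (mul_neg_of_neg_of_pos (hneg y hy0) (by linarith))
    exact hanti (left_mem_Icc.2 hpx.le) (right_mem_Icc.2 hpx.le) hpx

/-- Junk unless `m` is attained by the adjusted margin on `(c, ∞)`. -/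
noncomputable def marginPrice (W' : ℝ → ℝ) (c m : ℝ) : ℝ :=
  invFunOn (adjustedMargin W' c) (Ioi c) m

theorem marginPrice_spec (hW' : ∀ x > 0, HasDerivAt W' (W'' x) x) (hneg : ∀ x > 0, W' x < 0)
    (hdecay : ∃ r > (1 : ℝ), ∃ pb : ℝ, ∀ p > pb, W' p ≤ -r / p) {c m : ℝ} (hc : 0 < c)
    (hm : 0 ≤ m) : c < marginPrice W' c m ∧ adjustedMargin W' c (marginPrice W' c m) = m :=
  invFunOn_pos (exists_adjustedMargin_eq hW' hneg hdecay hc hm)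

theorem strictMonoOn_marginPrice (hW' : ∀ x > 0, HasDerivAt W' (W'' x) x)
    (hneg : ∀ x > 0, W' x < 0) (hsq : ∀ x > 0, W'' x / W' x ^ 2 < 1)
    (hdecay : ∃ r > (1 : ℝ), ∃ pb : ℝ, ∀ p > pb, W' p ≤ -r / p) {c : ℝ} (hc : 0 < c) :
    StrictMonoOn (marginPrice W' c) (Ici 0) :=
  (strictMonoOn_adjustedMargin hW' hneg hsq c).strictMonoOn_of_rightInvOn
    (fun _ hm => hc.trans (marginPrice_spec hW' hneg hdecay hc hm).1)
    fun _ hm => (marginPrice_spec hW' hneg hdecay hc hm).2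

theorem continuousOn_marginPrice (hW' : ∀ x > 0, HasDerivAt W' (W'' x) x)
    (hneg : ∀ x > 0, W' x < 0) (hsq : ∀ x > 0, W'' x / W' x ^ 2 < 1)
    (hdecay : ∃ r > (1 : ℝ), ∃ pb : ℝ, ∀ p > pb, W' p ≤ -r / p) {c : ℝ} (hc : 0 < c) :
    ContinuousOn (marginPrice W' c) (Ici 0) := by
  have hH := strictMonoOn_adjustedMargin hW' hneg hsq c
  have hσ0 := marginPrice_spec hW' hneg hdecay hc le_rfl
  refine (strictMonoOn_marginPrice hW' hneg hsq hdecay hc).continuousOn_Ici_of_surjOn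
    fun y hy => ?_
  have hy0 : 0 < y := (hc.trans hσ0.1).trans hy
  have hHy : 0 ≤ adjustedMargin W' c y :=
    hσ0.2 ▸ (hH (hc.trans hσ0.1) hy0 hy).le
  have hσy := marginPrice_spec hW' hneg hdecay hc hHy
  exact ⟨_, hHy, hH.injOn (hc.trans hσy.1) hy0 hσy.2⟩

end SingleProduct

section MarginFixedPoint

variable {ι : Type*} {W W' W'' : ι → ℝ → ℝ} {c : ι → ℝ} {s : Finset ι}

theorem le_of_margin_fixedPoint (hW : ∀ j, ∀ x > 0, HasDerivAt (W j) (W' j x) x)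
    (hW' : ∀ j, ∀ x > 0, HasDerivAt (W' j) (W'' j x) x) (hneg : ∀ j, ∀ x > 0, W' j x < 0)
    (hsq : ∀ j, ∀ x > 0, W'' j x / W' j x ^ 2 < 1) {A m m' : ℝ} {x x' : ι → ℝ} (hA : 0 < A)
    (hx : ∀ j ∈ s, 0 < x j ∧ adjustedMargin (W' j) (c j) (x j) = m)
    (hmx : m * A = ∑ j ∈ s, -exp (W j (x j)) / W' j (x j))
    (hx' : ∀ j ∈ s, 0 < x' j ∧ adjustedMargin (W' j) (c j) (x' j) = m')
    (hmx' : m' * A = ∑ j ∈ s, -exp (W j (x' j)) / W' j (x' j)) :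
    m' ≤ m := by
  by_contra! hmm'
  have hxx' : ∀ j ∈ s, x j < x' j := fun j hj => by
    rwa [← (strictMonoOn_adjustedMargin (hW' j) (hneg j) (hsq j) (c j)).lt_iff_lt (hx j hj).1
      (hx' j hj).1, (hx j hj).2, (hx' j hj).2]
  have : m' * A ≤ m * A := hmx ▸ hmx' ▸ Finset.sum_le_sum fun j hj =>
    ((strictAntiOn_neg_exp_div (hW j) (hW' j) (hneg j) (hsq j)) (hx j hj).1 (hx' j hj).1
      (hxx' j hj)).le
  exact hmm'.not_ge (le_of_mul_le_mul_right this hA)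

theorem eq_of_margin_fixedPoint (hW : ∀ j, ∀ x > 0, HasDerivAt (W j) (W' j x) x)
    (hW' : ∀ j, ∀ x > 0, HasDerivAt (W' j) (W'' j x) x) (hneg : ∀ j, ∀ x > 0, W' j x < 0)
    (hsq : ∀ j, ∀ x > 0, W'' j x / W' j x ^ 2 < 1) {A m m' : ℝ} {x x' : ι → ℝ} (hA : 0 < A)
    (hx : ∀ j ∈ s, 0 < x j ∧ adjustedMargin (W' j) (c j) (x j) = m)
    (hmx : m * A = ∑ j ∈ s, -exp (W j (x j)) / W' j (x j))
    (hx' : ∀ j ∈ s, 0 < x' j ∧ adjustedMargin (W' j) (c j) (x' j) = m')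
    (hmx' : m' * A = ∑ j ∈ s, -exp (W j (x' j)) / W' j (x' j)) :
    ∀ j ∈ s, x j = x' j := by
  have hmm' : m = m' :=
    le_antisymm (le_of_margin_fixedPoint hW hW' hneg hsq hA hx' hmx' hx hmx)
      (le_of_margin_fixedPoint hW hW' hneg hsq hA hx hmx hx' hmx')
  intro j hj
  exact (strictMonoOn_adjustedMargin (hW' j) (hneg j) (hsq j) (c j)).injOn (hx j hj).1
    (hx' j hj).1 ((hx j hj).2.trans (hmm'.trans (hx' j hj).2.symm))

theorem exists_margin_fixedPoint (hW : ∀ j, ∀ x > 0, HasDerivAt (W j) (W' j x) x)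
    (hW' : ∀ j, ∀ x > 0, HasDerivAt (W' j) (W'' j x) x) (hneg : ∀ j, ∀ x > 0, W' j x < 0)
    (hsq : ∀ j, ∀ x > 0, W'' j x / W' j x ^ 2 < 1)
    (hdecay : ∀ j, ∃ r > (1 : ℝ), ∃ pb : ℝ, ∀ p > pb, W' j p ≤ -r / p) (hc : ∀ j, 0 < c j)
    (s : Finset ι) {A : ℝ} (hA : 0 < A) :
    ∃ m, 0 ≤ m ∧ ∃ x : ι → ℝ, (∀ j ∈ s, c j < x j ∧ adjustedMargin (W' j) (c j) (x j) = m) ∧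
      m * A = ∑ j ∈ s, -exp (W j (x j)) / W' j (x j) := by
  set σ : ι → ℝ → ℝ := fun j => marginPrice (W' j) (c j)
  have hσ_pos (j : ι) {m : ℝ} (hm : m ∈ Ici 0) : σ j m ∈ Ioi 0 :=
    (hc j).trans (marginPrice_spec (hW' j) (hneg j) (hdecay j) (hc j) hm).1
  have hG (j : ι) : ContinuousOn (fun x => -exp (W j x) / W' j x) (Ioi 0) := fun x hx =>
    (((hW j x hx).continuousAt.rexp.neg).div (hW' j x hx).continuousAt
      (hneg j x hx).ne).continuousWithinAt
  obtain ⟨m, hm, hmA⟩ := exists_mul_eq_of_antitoneOn (Φ := fun m =>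
      ∑ j ∈ s, -exp (W j (σ j m)) / W' j (σ j m)) hA
    (continuousOn_finsetSum s fun j _ =>
      (hG j).comp (continuousOn_marginPrice (hW' j) (hneg j) (hsq j) (hdecay j) (hc j))
        fun _ => hσ_pos j)
    (fun a ha b hb hab => Finset.sum_le_sum fun j _ =>
      (strictAntiOn_neg_exp_div (hW j) (hW' j) (hneg j) (hsq j)).antitoneOn (hσ_pos j ha)
        (hσ_pos j hb)
        ((strictMonoOn_marginPrice (hW' j) (hneg j) (hsq j) (hdecay j) (hc j)).monotoneOn ha hb
          hab))
    (Finset.sum_nonneg fun j _ =>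
      div_nonneg_of_nonpos (neg_nonpos.2 (exp_pos _).le) (hneg j _ (hσ_pos j self_mem_Ici)).le)
  exact ⟨m, hm, fun j => σ j m,
    fun j _ => marginPrice_spec (hW' j) (hneg j) (hdecay j) (hc j) hm, hmA⟩

end MarginFixedPoint

section Firm

variable {ι : Type*} [Fintype ι] {W W' W'' : ι → ℝ → ℝ} {θ : ℝ} {c : ι → ℝ}
  {s : Finset ι}

/-- Logit profit of the firm selling the products in `s` at prices `q`: `W k (q k)` is the utility
`u_k` of product `k` and `θ` that of the outside good. -/
noncomputable def firmProfit (W : ι → ℝ → ℝ) (θ : ℝ) (c : ι → ℝ) (s : Finset ι) (q : ι → ℝ) :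
    ℝ :=
  ∑ i ∈ s, exp (W i (q i)) / (exp θ + ∑ k, exp (W k (q k))) * (q i - c i)

theorem firmProfit_eq_div (q : ι → ℝ) :
    firmProfit W θ c s q =
      (∑ i ∈ s, exp (W i (q i)) * (q i - c i)) / (exp θ + ∑ k, exp (W k (q k))) := by
  rw [firmProfit, Finset.sum_div]
  exact Finset.sum_congr rfl fun i _ => div_mul_eq_mul_div _ _ _

variable [DecidableEq ι]

noncomputable def outsideWeight (W : ι → ℝ → ℝ) (θ : ℝ) (s : Finset ι) (q : ι → ℝ) : ℝ :=
  exp θ + ∑ k ∈ sᶜ, exp (W k (q k))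

theorem outsideWeight_pos (W : ι → ℝ → ℝ) (θ : ℝ) (s : Finset ι) (q : ι → ℝ) :
    0 < outsideWeight W θ s q := by
  unfold outsideWeight; positivity

theorem outsideWeight_congr {q q' : ι → ℝ} (h : ∀ i ∉ s, q i = q' i) :
    outsideWeight W θ s q = outsideWeight W θ s q' := by
  unfold outsideWeight
  rw [Finset.sum_congr rfl fun i hi => by rw [h i (Finset.mem_compl.1 hi)]]

theorem firmProfit_sub_eq (q : ι → ℝ) (m : ℝ) :
    firmProfit W θ c s q - m =
      (∑ i ∈ s, exp (W i (q i)) * (q i - c i - m) - m * outsideWeight W θ s q) /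
        (exp θ + ∑ k, exp (W k (q k))) := by
  have hS :
      exp θ + ∑ k, exp (W k (q k)) = outsideWeight W θ s q + ∑ k ∈ s, exp (W k (q k)) := by
    rw [outsideWeight, ← Finset.sum_add_sum_compl s]; ring
  have hS0 : exp θ + ∑ k, exp (W k (q k)) ≠ 0 := by positivity
  rw [firmProfit_eq_div, div_sub' hS0, hS]
  congr 1
  simp only [mul_sub, Finset.sum_sub_distrib, ← Finset.sum_mul]
  ring

theorem firmProfit_lt_iff (q : ι → ℝ) (m : ℝ) :
    firmProfit W θ c s q < m ↔
      ∑ i ∈ s, exp (W i (q i)) * (q i - c i - m) < m * outsideWeight W θ s q := by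
  rw [← sub_neg, firmProfit_sub_eq, div_lt_iff₀ (by positivity), zero_mul, sub_neg]

theorem firmProfit_eq_iff (q : ι → ℝ) (m : ℝ) :
    firmProfit W θ c s q = m ↔
      ∑ i ∈ s, exp (W i (q i)) * (q i - c i - m) = m * outsideWeight W θ s q := by
  rw [← sub_eq_zero, firmProfit_sub_eq, div_eq_zero_iff, sub_eq_zero,
    or_iff_left (by positivity)]

theorem firmProfit_update {q : ι → ℝ} {j : ι} (hj : j ∈ s) (x : ℝ) :
    firmProfit W θ c s (update q j x) =
      (exp (W j x) * (x - c j) + ∑ i ∈ s \ {j}, exp (W i (q i)) * (q i - c i)) /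
        (exp (W j x) + (exp θ + ∑ k ∈ Finset.univ \ {j}, exp (W k (q k)))) := by
  rw [firmProfit_eq_div,
    Finset.sum_apply_update_of_mem hj (fun i y => exp (W i y) * (y - c i)),
    Finset.sum_apply_update_of_mem (Finset.mem_univ j) (fun k y => exp (W k y))]
  ring

theorem hasDerivAt_firmProfit_update {q : ι → ℝ} {j : ι} (hj : j ∈ s) {d : ℝ}
    (hW : HasDerivAt (W j) d (q j)) :
    HasDerivAt (fun x => firmProfit W θ c s (update q j x))
      (exp (W j (q j)) / (exp θ + ∑ k, exp (W k (q k))) *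
        (1 + d * (q j - c j - firmProfit W θ c s q))) (q j) := by
  have hS : exp θ + ∑ k, exp (W k (q k)) =
      exp (W j (q j)) + (exp θ + ∑ k ∈ Finset.univ \ {j}, exp (W k (q k))) := by
    rw [Finset.sum_eq_add_sum_sdiff_singleton_of_mem (Finset.mem_univ j), add_left_comm]
  have hq := firmProfit_update (W := W) (θ := θ) (c := c) (q := q) hj (q j)
  rw [update_eq_self] at hq
  simp only [firmProfit_update hj]
  rw [hq, hS]
  exact hasDerivAt_exp_mul_sub_add_div hW (by positivity)

theorem hasDerivAt_firmProfit_update_zero_iff {q : ι → ℝ} {j : ι} (hj : j ∈ s)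
    (hW : HasDerivAt (W j) (W' j (q j)) (q j)) (hW'0 : W' j (q j) ≠ 0) :
    HasDerivAt (fun x => firmProfit W θ c s (update q j x)) 0 (q j) ↔
      adjustedMargin (W' j) (c j) (q j) = firmProfit W θ c s q := by
  have hD := hasDerivAt_firmProfit_update (θ := θ) (c := c) hj hW
  have hfoc : 1 + W' j (q j) * (q j - c j - firmProfit W θ c s q) =
      W' j (q j) * (adjustedMargin (W' j) (c j) (q j) - firmProfit W θ c s q) := by
    unfold adjustedMargin; field_simp; ring
  have hkey : exp (W j (q j)) / (exp θ + ∑ k, exp (W k (q k))) *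
      (1 + W' j (q j) * (q j - c j - firmProfit W θ c s q)) = 0 ↔
      adjustedMargin (W' j) (c j) (q j) = firmProfit W θ c s q := by
    rw [hfoc, mul_eq_zero, mul_eq_zero, sub_eq_zero]
    simp only [hW'0, false_or, or_iff_right_iff_imp]
    intro h
    exact absurd h (by positivity)
  exact ⟨fun h => hkey.1 (hD.unique h), fun h => hkey.2 h ▸ hD⟩

theorem firmProfit_eq_iff_of_adjustedMargin_eq {q : ι → ℝ} {m : ℝ}
    (hq : ∀ j ∈ s, adjustedMargin (W' j) (c j) (q j) = m) :
    firmProfit W θ c s q = m ↔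
      m * outsideWeight W θ s q = ∑ j ∈ s, -exp (W j (q j)) / W' j (q j) := by
  rw [firmProfit_eq_iff, eq_comm]
  refine Eq.congr_right (Finset.sum_congr rfl fun j hj => ?_)
  rw [← hq j hj, sub_sub_adjustedMargin]
  ring

theorem exists_adjustedMargin_eq_firmProfit (hW : ∀ j, ∀ x > 0, HasDerivAt (W j) (W' j x) x)
    (hW' : ∀ j, ∀ x > 0, HasDerivAt (W' j) (W'' j x) x) (hneg : ∀ j, ∀ x > 0, W' j x < 0)
    (hsq : ∀ j, ∀ x > 0, W'' j x / W' j x ^ 2 < 1)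
    (hdecay : ∀ j, ∃ r > (1 : ℝ), ∃ pb : ℝ, ∀ p > pb, W' j p ≤ -r / p) (hc : ∀ j, 0 < c j)
    (p₀ : ι → ℝ) :
    ∃ p : ι → ℝ, (∀ i ∉ s, p i = p₀ i) ∧ 0 ≤ firmProfit W θ c s p ∧
      ∀ j ∈ s, c j < p j ∧ adjustedMargin (W' j) (c j) (p j) = firmProfit W θ c s p := by
  obtain ⟨m, hm, x, hx, hmA⟩ :=
    exists_margin_fixedPoint hW hW' hneg hsq hdecay hc s (outsideWeight_pos W θ s p₀)
  set p := s.piecewise x p₀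
  have hp_out (i : ι) (hi : i ∉ s) : p i = p₀ i := s.piecewise_eq_of_notMem x p₀ hi
  have hpx (j : ι) (hj : j ∈ s) : p j = x j := s.piecewise_eq_of_mem x p₀ hj
  have hpm : firmProfit W θ c s p = m := by
    rw [firmProfit_eq_iff_of_adjustedMargin_eq fun j hj => hpx j hj ▸ (hx j hj).2,
      outsideWeight_congr hp_out, hmA]
    exact Finset.sum_congr rfl fun j hj => by rw [hpx j hj]
  exact ⟨p, hp_out, hpm ▸ hm, fun j hj => hpm ▸ hpx j hj ▸ hx j hj⟩

theorem eq_of_adjustedMargin_eq_firmProfit (hW : ∀ j, ∀ x > 0, HasDerivAt (W j) (W' j x) x)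
    (hW' : ∀ j, ∀ x > 0, HasDerivAt (W' j) (W'' j x) x) (hneg : ∀ j, ∀ x > 0, W' j x < 0)
    (hsq : ∀ j, ∀ x > 0, W'' j x / W' j x ^ 2 < 1) {p q : ι → ℝ}
    (hp : ∀ j ∈ s, 0 < p j ∧ adjustedMargin (W' j) (c j) (p j) = firmProfit W θ c s p)
    (hq : ∀ j ∈ s, 0 < q j ∧ adjustedMargin (W' j) (c j) (q j) = firmProfit W θ c s q)
    (hqp_out : ∀ i ∉ s, q i = p i) : q = p := by
  have hpA := (firmProfit_eq_iff_of_adjustedMargin_eq fun j hj => (hp j hj).2).1 rfl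
  have hqA := (firmProfit_eq_iff_of_adjustedMargin_eq fun j hj => (hq j hj).2).1 rfl
  rw [outsideWeight_congr hqp_out] at hqA
  have hqp := eq_of_margin_fixedPoint hW hW' hneg hsq (outsideWeight_pos W θ s p) hq hqA hp hpA
  funext i
  by_cases hi : i ∈ s
  · exact hqp i hi
  · exact hqp_out i hi

theorem firmProfit_lt_of_ne (hW : ∀ j, ∀ x > 0, HasDerivAt (W j) (W' j x) x)
    (hW' : ∀ j, ∀ x > 0, HasDerivAt (W' j) (W'' j x) x) (hneg : ∀ j, ∀ x > 0, W' j x < 0)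
    (hsq : ∀ j, ∀ x > 0, W'' j x / W' j x ^ 2 < 1) {p q : ι → ℝ}
    (hcp : ∀ j ∈ s, 0 < c j + firmProfit W θ c s p)
    (hp : ∀ j ∈ s, 0 < p j ∧ adjustedMargin (W' j) (c j) (p j) = firmProfit W θ c s p)
    (hqp_out : ∀ i ∉ s, q i = p i) (hqp : q ≠ p) :
    firmProfit W θ c s q < firmProfit W θ c s p := by
  obtain ⟨j, hj, hqj⟩ : ∃ j ∈ s, q j ≠ p j := by
    by_contra! h
    exact hqp (funext fun i => if hi : i ∈ s then h i hi else hqp_out i hi)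
  have hψ {i : ι} (hi : i ∈ s) (hqi : q i ≠ p i) :=
    exp_mul_sub_lt_of_adjustedMargin_eq (hW i) (hW' i) (hneg i) (hsq i) (hcp i hi) (hp i hi).1
      (hp i hi).2 hqi
  rw [firmProfit_lt_iff, outsideWeight_congr hqp_out, ← (firmProfit_eq_iff p _).1 rfl]
  refine Finset.sum_lt_sum (fun i hi => ?_) ⟨j, hj, hψ hj hqj⟩
  rcases eq_or_ne (q i) (p i) with hqi | hqi
  · rw [hqi]
  · exact (hψ hi hqi).le

end Firm

theorem stmt_11_general {J : ℕ} (w w' w'' : Fin J → ℝ → ℝ) (v : Fin J → ℝ) (θ : ℝ)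
    (c : Fin J → ℝ) (Jf : Finset (Fin J)) (pout : Fin J → ℝ)
    (hc : ∀ j, 0 < c j)
    (hd1 : ∀ k : Fin J, ∀ x > (0:ℝ), HasDerivAt (w k) (w' k x) x)
    (hd2 : ∀ k : Fin J, ∀ x > (0:ℝ), HasDerivAt (w' k) (w'' k x) x)
    (hneg : ∀ k : Fin J, ∀ x > (0:ℝ), w' k x < 0)
    (hedsq : ∀ k : Fin J, ∃ r > (1:ℝ), ∃ pb : ℝ, ∀ p > pb, w' k p ≤ -r / p)
    (hsq : ∀ k : Fin J, ∀ x > (0:ℝ), w'' k x / (w' k x) ^ 2 < 1) :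
    let P : (Fin J → ℝ) → Fin J → ℝ := fun q i =>
      Real.exp (w i (q i) + v i) / (Real.exp θ + ∑ k, Real.exp (w k (q k) + v k))
    let profit : (Fin J → ℝ) → ℝ := fun q => ∑ i ∈ Jf, P q i * (q i - c i)
    ∃ p : Fin J → ℝ,
      -- competitor prices fixed
      (∀ i, i ∉ Jf → p i = pout i) ∧
      -- the stationary point lies in (c_f, ∞)
      (∀ j ∈ Jf, c j < p j) ∧
      -- p is stationary for the firm's profit
      (∀ j ∈ Jf, HasDerivAt (fun x => profit (Function.update p j x)) 0 (p j)) ∧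
      -- uniqueness of stationary points
      (∀ q : Fin J → ℝ, (∀ i, i ∉ Jf → q i = pout i) → (∀ j ∈ Jf, 0 < q j) →
        (∀ j ∈ Jf, HasDerivAt (fun x => profit (Function.update q j x)) 0 (q j)) →
        q = p) ∧
      -- p is the unique global maximizer over nonnegative firm prices
      (∀ q : Fin J → ℝ, (∀ i, i ∉ Jf → q i = pout i) → (∀ j ∈ Jf, 0 ≤ q j) →
        q ≠ p → profit q < profit p) := by
  intro P profit
  set W : Fin J → ℝ → ℝ := fun k x => w k x + v k
  have hW (k : Fin J) (x : ℝ) (hx : 0 < x) : HasDerivAt (W k) (w' k x) x :=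
    (hd1 k x hx).add_const (v k)
  rw [show profit = firmProfit W θ c Jf from rfl]
  have hstat (q : Fin J → ℝ) (j : Fin J) (hj : j ∈ Jf) (hq : 0 < q j) :=
    hasDerivAt_firmProfit_update_zero_iff (θ := θ) (c := c) hj (hW j _ hq) (hneg j _ hq).ne
  obtain ⟨p, hp_out, hp_nonneg, hp⟩ :=
    exists_adjustedMargin_eq_firmProfit (θ := θ) (s := Jf) hW hd2 hneg hsq hedsq hc pout
  have hp' (j : Fin J) (hj : j ∈ Jf) :
      0 < p j ∧ adjustedMargin (w' j) (c j) (p j) = firmProfit W θ c Jf p :=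
    ⟨(hc j).trans (hp j hj).1, (hp j hj).2⟩
  have hagree (q : Fin J → ℝ) (hq_out : ∀ i ∉ Jf, q i = pout i) (i : Fin J) (hi : i ∉ Jf) :
      q i = p i :=
    (hq_out i hi).trans (hp_out i hi).symm
  refine ⟨p, hp_out, fun j hj => (hp j hj).1,
    fun j hj => (hstat p j hj (hp' j hj).1).2 (hp j hj).2,
    fun q hq_out hq_pos hq_stat => ?_, fun q hq_out _ hqp => ?_⟩
  · exact eq_of_adjustedMargin_eq_firmProfit hW hd2 hneg hsq hp'
      (fun j hj => ⟨hq_pos j hj, (hstat q j hj (hq_pos j hj)).1 (hq_stat j hj)⟩) (hagree q hq_out)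
  · exact firmProfit_lt_of_ne hW hd2 hneg hsq
      (fun j _ => add_pos_of_pos_of_nonneg (hc j) hp_nonneg) hp' (hagree q hq_out) hqp

theorem stmt_11 {J : ℕ} (w w' w'' : Fin J → ℝ → ℝ) (v : Fin J → ℝ) (θ : ℝ)
    (c : Fin J → ℝ) (Jf : Finset (Fin J)) (pout : Fin J → ℝ)
    (hc : ∀ j, 0 < c j)
    (hd1 : ∀ k : Fin J, ∀ x > (0:ℝ), HasDerivAt (w k) (w' k x) x)
    (hd2 : ∀ k : Fin J, ∀ x > (0:ℝ), HasDerivAt (w' k) (w'' k x) x)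
    (hneg : ∀ k : Fin J, ∀ x > (0:ℝ), w' k x < 0)
    (hedsq : ∀ k : Fin J, ∃ r > (1:ℝ), ∃ pb : ℝ, ∀ p > pb, w' k p ≤ -r / p)
    (hsq : ∀ k : Fin J, ∀ x > (0:ℝ), w'' k x / (w' k x) ^ 2 < 1)
    (hout : ∀ i, i ∉ Jf → 0 ≤ pout i) :
    let P : (Fin J → ℝ) → Fin J → ℝ := fun q i =>
      Real.exp (w i (q i) + v i) / (Real.exp θ + ∑ k, Real.exp (w k (q k) + v k))
    let profit : (Fin J → ℝ) → ℝ := fun q => ∑ i ∈ Jf, P q i * (q i - c i)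
    ∃ p : Fin J → ℝ,
      -- competitor prices fixed
      (∀ i, i ∉ Jf → p i = pout i) ∧
      -- the stationary point lies in (c_f, ∞)
      (∀ j ∈ Jf, c j < p j) ∧
      -- p is stationary for the firm's profit
      (∀ j ∈ Jf, HasDerivAt (fun x => profit (Function.update p j x)) 0 (p j)) ∧
      -- uniqueness of stationary points
      (∀ q : Fin J → ℝ, (∀ i, i ∉ Jf → q i = pout i) → (∀ j ∈ Jf, 0 < q j) →
        (∀ j ∈ Jf, HasDerivAt (fun x => profit (Function.update q j x)) 0 (q j)) →
        q = p) ∧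
      -- p is the unique global maximizer over nonnegative firm prices
      (∀ q : Fin J → ℝ, (∀ i, i ∉ Jf → q i = pout i) → (∀ j ∈ Jf, 0 ≤ q j) →
        q ≠ p → profit q < profit p) :=
  stmt_11_general w w' w'' v θ c Jf pout hc hd1 hd2 hneg hedsq hsq
end

section
/- Under the Logit model with constant unit costs, suppose θ > -∞ and each w_j is strictly decreasing, twice continuously differentiable, with sub-quadratic second derivatives. If p_f maximizes firm f's profit, and products j, k ∈ J_f satisfy c_j = c_k and w_j = w_k (identical cost and identical price-sensitivity functions, even if values v_j ≠ v_k), then p_j = p_k. (Proof: both prices solve θ̃(p) = π̂_f(p) + c where θ̃(p) = p - 1/|w'(p)| is strictly increasing when ω < 1.) -/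
/-!
Every own price satisfies the first-order condition `p_j - c_j + 1 / w_j'(p_j) = π_f(p)`, whose
right-hand side, the firm's profit, is the same for all of the firm's products. Since
`w''/w'^2 < 1`, the map `t ↦ t + 1 / w'(t)` has positive derivative `1 - w''/w'^2`, so it is
injective, and two products with the same `c` and `w'` get the same price.
-/

open Filter Set

noncomputable def logitP18 {J : ℕ} (w : Fin J → ℝ → ℝ) (v : Fin J → ℝ) (θ : ℝ)
    (p : Fin J → ℝ) (j : Fin J) : ℝ :=
  Real.exp (w j (p j) + v j) / (Real.exp θ + ∑ k, Real.exp (w k (p k) + v k))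

noncomputable def profit18 {J : ℕ} (w : Fin J → ℝ → ℝ) (v : Fin J → ℝ) (θ : ℝ)
    (c : Fin J → ℝ) (Jf : Finset (Fin J)) (p : Fin J → ℝ) : ℝ :=
  ∑ j ∈ Jf, logitP18 w v θ p j * (p j - c j)

open Function Real

theorem Finset.sum_apply_update_of_mem_s18 {ι M : Type*} [DecidableEq ι] [AddCommMonoid M]
    {α : ι → Type*} {s : Finset ι} {i : ι} (hi : i ∈ s) (F : ∀ k, α k → M) (p : ∀ k, α k)
    (t : α i) :
    ∑ k ∈ s, F k (update p i t k) = F i t + ∑ k ∈ s.erase i, F k (p k) := by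
  simp_rw [apply_update F, Finset.sum_update_of_mem hi, Finset.sdiff_singleton_eq_erase]

theorem profit18_eq {J : ℕ} (w : Fin J → ℝ → ℝ) (v : Fin J → ℝ) (θ : ℝ) (c : Fin J → ℝ)
    (Jf : Finset (Fin J)) (p : Fin J → ℝ) :
    profit18 w v θ c Jf p = (∑ j ∈ Jf, exp (w j (p j) + v j) * (p j - c j)) /
      (exp θ + ∑ k, exp (w k (p k) + v k)) := by
  simp only [profit18, logitP18, div_mul_eq_mul_div, Finset.sum_div]

theorem profit18_update {J : ℕ} (w : Fin J → ℝ → ℝ) (v : Fin J → ℝ) (θ : ℝ) (c : Fin J → ℝ)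
    {Jf : Finset (Fin J)} (p : Fin J → ℝ) {j : Fin J} (hj : j ∈ Jf) (t : ℝ) :
    profit18 w v θ c Jf (update p j t) =
      ((∑ i ∈ Jf.erase j, exp (w i (p i) + v i) * (p i - c i)) + exp (w j t + v j) * (t - c j)) /
      ((exp θ + ∑ i ∈ Finset.univ.erase j, exp (w i (p i) + v i)) + exp (w j t + v j)) := by
  rw [profit18_eq,
    Finset.sum_apply_update_of_mem_s18 hj (fun i x => exp (w i x + v i) * (x - c i)),
    Finset.sum_apply_update_of_mem_s18 (Finset.mem_univ j) (fun i x => exp (w i x + v i))]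
  ring

theorem logit_foc {u : ℝ → ℝ} {u' S A c t : ℝ} (hu : HasDerivAt u u' t) (hu' : u' ≠ 0)
    (hA : 0 ≤ A)
    (hmax : IsLocalMax (fun s => (S + exp (u s) * (s - c)) / (A + exp (u s))) t) :
    t - c + 1 / u' = (S + exp (u t) * (t - c)) / (A + exp (u t)) := by
  set E := exp (u t)
  have hEpos : 0 < E := exp_pos _
  have hden : A + E ≠ 0 := by positivity
  have hderiv : HasDerivAt (fun s => (S + exp (u s) * (s - c)) / (A + exp (u s)))
      (((E * u' * (t - c) + E * 1) * (A + E) - (S + E * (t - c)) * (E * u')) / (A + E) ^ 2) t :=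
    ((hu.exp.mul ((hasDerivAt_id' t).sub_const c)).const_add S).div (hu.exp.const_add A) hden
  have hzero : E * ((u' * (t - c) + 1) * (A + E) - u' * (S + E * (t - c))) = 0 := by
    have h := hmax.hasDerivAt_eq_zero hderiv
    rw [div_eq_zero_iff, or_iff_left (pow_ne_zero 2 hden)] at h
    linear_combination h
  have hfoc := (mul_eq_zero.mp hzero).resolve_left hEpos.ne'
  rw [eq_div_iff hden]
  field_simp
  linear_combination hfoc

theorem strictMonoOn_add_inv {f f' : ℝ → ℝ} {D : Set ℝ} (hD : Convex ℝ D)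
    (hf : ∀ x ∈ D, HasDerivAt f (f' x) x) (hf0 : ∀ x ∈ D, f x ≠ 0)
    (hf' : ∀ x ∈ D, f' x / f x ^ 2 < 1) :
    StrictMonoOn (fun x => x + (f x)⁻¹) D := by
  have hderiv : ∀ x ∈ D, HasDerivAt (fun x => x + (f x)⁻¹) (1 - f' x / f x ^ 2) x := fun x hx =>
    ((hasDerivAt_id' x).add ((hf x hx).inv (hf0 x hx))).congr_deriv (by ring)
  refine strictMonoOn_of_deriv_pos hD (fun x hx => (hderiv x hx).continuousAt.continuousWithinAt)
    fun x hx => ?_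
  rw [(hderiv x (interior_subset hx)).deriv]
  linarith [hf' x (interior_subset hx)]

theorem isLocalMax_profit18_update {J : ℕ} (w : Fin J → ℝ → ℝ) (v : Fin J → ℝ) (θ : ℝ)
    (c : Fin J → ℝ) {Jf : Finset (Fin J)} {p : Fin J → ℝ} (hp : ∀ i, 0 < p i)
    (hmax : ∀ q : Fin J → ℝ, (∀ i, i ∉ Jf → q i = p i) → (∀ i, 0 ≤ q i) →
      profit18 w v θ c Jf q ≤ profit18 w v θ c Jf p)
    {j : Fin J} (hj : j ∈ Jf) :
    IsLocalMax (fun t => profit18 w v θ c Jf (update p j t)) (p j) := by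
  filter_upwards [Ioi_mem_nhds (hp j)] with t ht
  rw [update_eq_self]
  refine hmax _ (fun i hi => update_of_ne (ne_of_mem_of_not_mem hj hi).symm t p) fun i => ?_
  rcases eq_or_ne i j with rfl | hij
  · simpa using le_of_lt ht
  · simpa [update_of_ne hij] using (hp i).le

theorem profit18_foc {J : ℕ} {w w' : Fin J → ℝ → ℝ} (v : Fin J → ℝ) (θ : ℝ)
    (c : Fin J → ℝ) {Jf : Finset (Fin J)}
    (hd1 : ∀ k : Fin J, ∀ x > (0:ℝ), HasDerivAt (w k) (w' k x) x)
    (hneg : ∀ k : Fin J, ∀ x > (0:ℝ), w' k x < 0)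
    {p : Fin J → ℝ} (hp : ∀ i, 0 < p i)
    (hmax : ∀ q : Fin J → ℝ, (∀ i, i ∉ Jf → q i = p i) → (∀ i, 0 ≤ q i) →
      profit18 w v θ c Jf q ≤ profit18 w v θ c Jf p)
    {j : Fin J} (hj : j ∈ Jf) :
    p j - c j + 1 / w' j (p j) = profit18 w v θ c Jf p := by
  have hloc := isLocalMax_profit18_update w v θ c hp hmax hj
  simp only [profit18_update w v θ c p hj] at hloc
  calc p j - c j + 1 / w' j (p j) = profit18 w v θ c Jf (update p j (p j)) := by
        rw [profit18_update w v θ c p hj]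
        exact logit_foc ((hd1 j _ (hp j)).add_const (v j)) (hneg j _ (hp j)).ne
          (by positivity) hloc
    _ = profit18 w v θ c Jf p := by rw [update_eq_self]

theorem stmt_18_general {J : ℕ} (w w' w'' : Fin J → ℝ → ℝ) (v : Fin J → ℝ) (θ : ℝ)
    (c : Fin J → ℝ) (Jf : Finset (Fin J))
    (hd1 : ∀ k : Fin J, ∀ x > (0:ℝ), HasDerivAt (w k) (w' k x) x)
    (hd2 : ∀ k : Fin J, ∀ x > (0:ℝ), HasDerivAt (w' k) (w'' k x) x)
    (hneg : ∀ k : Fin J, ∀ x > (0:ℝ), w' k x < 0)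
    -- sub-quadratic second derivatives
    (hsq : ∀ k : Fin J, ∀ x > (0:ℝ), w'' k x / (w' k x) ^ 2 < 1)
    (p : Fin J → ℝ) (hp : ∀ i, 0 < p i)
    -- p_f maximizes firm f's profit
    (hmax : ∀ q : Fin J → ℝ, (∀ i, i ∉ Jf → q i = p i) → (∀ i, 0 ≤ q i) →
      profit18 w v θ c Jf q ≤ profit18 w v θ c Jf p)
    (j k : Fin J) (hj : j ∈ Jf) (hk : k ∈ Jf)
    (hcjk : c j = c k) (hwjk' : w' j = w' k) :
    p j = p k := by
  have hfoc : p j + (w' j (p j))⁻¹ = p k + (w' j (p k))⁻¹ := by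
    have h := (profit18_foc v θ c hd1 hneg hp hmax hj).trans
      (profit18_foc v θ c hd1 hneg hp hmax hk).symm
    rw [hcjk, ← hwjk', one_div, one_div] at h
    linarith
  exact (strictMonoOn_add_inv (convex_Ioi 0) (hd2 j) (fun x hx => (hneg j x hx).ne)
    (hsq j)).injOn (hp j) (hp k) hfoc

theorem stmt_18 {J : ℕ} (w w' w'' : Fin J → ℝ → ℝ) (v : Fin J → ℝ) (θ : ℝ)
    (c : Fin J → ℝ) (Jf : Finset (Fin J)) (hc : ∀ i, 0 ≤ c i)
    (hd1 : ∀ k : Fin J, ∀ x > (0:ℝ), HasDerivAt (w k) (w' k x) x)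
    (hd2 : ∀ k : Fin J, ∀ x > (0:ℝ), HasDerivAt (w' k) (w'' k x) x)
    (hneg : ∀ k : Fin J, ∀ x > (0:ℝ), w' k x < 0)
    -- sub-quadratic second derivatives
    (hsq : ∀ k : Fin J, ∀ x > (0:ℝ), w'' k x / (w' k x) ^ 2 < 1)
    (p : Fin J → ℝ) (hp : ∀ i, 0 < p i)
    -- p_f maximizes firm f's profit
    (hmax : ∀ q : Fin J → ℝ, (∀ i, i ∉ Jf → q i = p i) → (∀ i, 0 ≤ q i) →
      profit18 w v θ c Jf q ≤ profit18 w v θ c Jf p)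
    (j k : Fin J) (hj : j ∈ Jf) (hk : k ∈ Jf)
    (hcjk : c j = c k) (hwjk : w j = w k) (hwjk' : w' j = w' k) :
    p j = p k :=
  stmt_18_general w w' w'' v θ c Jf hd1 hd2 hneg hsq p hp hmax j k hj hk hcjk hwjk'
end
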